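/- For the worst-case logistic loss f_k and t ≤ k, min over x ∈ K_{t,k} of f_k(x) equals 8(k - t)·log 2 + min over u ∈ ℝ^t of f_t(u), where K_{t,k} = span{e_{k-t+1}, ..., e_k}. -/

import Mathlib

noncomputable section

/-- The k×k matrix `W_k` with 1's on the main anti-diagonal (1-based entries `i+j = k+1`)
and -1's on the adjacent anti-diagonal (`i+j = k`). -/
def Wmat (k : ℕ) : Matrix (Fin k) (Fin k) ℝ :=
  Matrix.of fun i j =>
    if (i : ℕ) + (j : ℕ) + 2 = k + 1 then 1
    else if (i : ℕ) + (j : ℕ) + 2 = k then -1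
    else 0

/-- The 4k×k data matrix with vertical blocks `2σW_k, -2ζW_k, -2σW_k, 2ζW_k`. -/
def Amat (σ ζ : ℝ) (k : ℕ) : Matrix (Fin (4 * k)) (Fin k) ℝ :=
  Matrix.of fun i j =>
    if h1 : (i : ℕ) < k then 2 * σ * Wmat k ⟨i, h1⟩ j
    else if h2 : (i : ℕ) < 2 * k then -2 * ζ * Wmat k ⟨(i : ℕ) - k, by omega⟩ j
    else if h3 : (i : ℕ) < 3 * k then -2 * σ * Wmat k ⟨(i : ℕ) - 2 * k, by omega⟩ j
    else 2 * ζ * Wmat k ⟨(i : ℕ) - 3 * k, by have := i.isLt; omega⟩ j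

/-- The response vector `b_k = (𝟙_k, 𝟙_k, -𝟙_k, -𝟙_k)`. -/
def bvec (k : ℕ) : Fin (4 * k) → ℝ := fun i => if (i : ℕ) < 2 * k then 1 else -1

/-- The binary logistic regression loss `f_k(x) = h(A_k x) - b_kᵀ A_k x` with
`h(u) = Σᵢ 2 log(2 cosh(uᵢ/2))`. -/
def fk (σ ζ : ℝ) (k : ℕ) (x : Fin k → ℝ) : ℝ :=
  (∑ i, 2 * Real.log (2 * Real.cosh ((Amat σ ζ k).mulVec x i / 2)))
    - ∑ i, bvec k i * (Amat σ ζ k).mulVec x i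

/-- `x* = c·(1, 2, …, k)ᵀ`. -/
def xstar (c : ℝ) (k : ℕ) : Fin k → ℝ := fun i => c * ((i : ℕ) + 1)

/-- `K_{t,k} = span{e_{k-t+1}, …, e_k}` (1-based indexing). -/
def Kspan (k t : ℕ) : Submodule ℝ (Fin k → ℝ) :=
  Submodule.span ℝ ((fun i : Fin k => Pi.single i (1 : ℝ)) '' {i : Fin k | k - t ≤ (i : ℕ)})

end

/-!
Every row of `A_k` is a multiple of a row of `W_k`, so `f_k x = ∑ r, ψ ((W_k x) r)` for a
one-variable function `ψ = rowLoss σ ζ` with `ψ 0 = 8 log 2` and `ψ ≥ 0` (as `2 log (2 cosh (a/2)) ≥ |a|`).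
Writing `k = s + t`, the elements of `K_{t,k}` are the paddings `(0_s, u)`, and the rows of
`W_k (0_s, u)` are those of `W_t u` followed by `s` zeros. Hence `f_k (0_s, u) = 8 s log 2 + f_t u`,
and since `f_t` is bounded below the infima differ by this constant.
-/

open Finset Matrix

lemma abs_le_two_mul_log_two_mul_cosh_half (a : ℝ) :
    |a| ≤ 2 * Real.log (2 * Real.cosh (a / 2)) := by
  have hexp : Real.exp (|a| / 2) ≤ 2 * Real.cosh (a / 2) := by
    rw [Real.cosh_eq]
    rcases abs_choice a with h | h <;> rw [h]
    · linarith [Real.exp_pos (-(a / 2))]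
    · rw [neg_div]; linarith [Real.exp_pos (a / 2)]
  have := Real.log_le_log (Real.exp_pos _) hexp
  rw [Real.log_exp] at this
  linarith

def blockCoeff (σ ζ : ℝ) : Fin 4 → ℝ := ![2 * σ, -2 * ζ, -2 * σ, 2 * ζ]

def blockSign : Fin 4 → ℝ := ![1, 1, -1, -1]

noncomputable def rowLoss (σ ζ s : ℝ) : ℝ :=
  ∑ q, (2 * Real.log (2 * Real.cosh (blockCoeff σ ζ q * s / 2))
    - blockSign q * (blockCoeff σ ζ q * s))

lemma Amat_finProdFinEquiv (σ ζ : ℝ) {k : ℕ} (q : Fin 4) (r j : Fin k) :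
    Amat σ ζ k (finProdFinEquiv (q, r)) j = blockCoeff σ ζ q * Wmat k r j := by
  have hr := r.isLt
  fin_cases q <;>
  · simp only [Amat, of_apply, finProdFinEquiv_apply_val]
    split_ifs <;> first | omega | (simp only [blockCoeff]; congr 2 <;> ext <;> simp <;> omega)

lemma bvec_finProdFinEquiv {k : ℕ} (q : Fin 4) (r : Fin k) :
    bvec k (finProdFinEquiv (q, r)) = blockSign q := by
  have hr := r.isLt
  fin_cases q <;> simp [bvec, blockSign, finProdFinEquiv_apply_val] <;> omega

lemma fk_eq_sum_rowLoss (σ ζ : ℝ) (k : ℕ) (x : Fin k → ℝ) :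
    fk σ ζ k x = ∑ r, rowLoss σ ζ ((Wmat k *ᵥ x) r) := by
  have hAx (q : Fin 4) (r : Fin k) :
      (Amat σ ζ k *ᵥ x) (finProdFinEquiv (q, r)) = blockCoeff σ ζ q * (Wmat k *ᵥ x) r := by
    simp only [mulVec, dotProduct, Amat_finProdFinEquiv, mul_sum, mul_assoc]
  rw [fk, ← sum_sub_distrib, ← finProdFinEquiv.sum_comp, Fintype.sum_prod_type, sum_comm]
  simp only [hAx, bvec_finProdFinEquiv, rowLoss]

lemma rowLoss_nonneg (σ ζ s : ℝ) : 0 ≤ rowLoss σ ζ s := by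
  refine sum_nonneg fun q _ => sub_nonneg.2 ?_
  have hsign : |blockSign q| = 1 := by fin_cases q <;> simp [blockSign]
  calc blockSign q * (blockCoeff σ ζ q * s) ≤ |blockCoeff σ ζ q * s| := by
        simpa [abs_mul, hsign] using le_abs_self (blockSign q * (blockCoeff σ ζ q * s))
    _ ≤ _ := abs_le_two_mul_log_two_mul_cosh_half _

lemma rowLoss_zero (σ ζ : ℝ) : rowLoss σ ζ 0 = 8 * Real.log 2 := by
  norm_num [rowLoss]
  ring

lemma fk_nonneg (σ ζ : ℝ) (k : ℕ) (x : Fin k → ℝ) : 0 ≤ fk σ ζ k x := by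
  rw [fk_eq_sum_rowLoss]
  exact sum_nonneg fun r _ => rowLoss_nonneg σ ζ _

lemma Wmat_add_natAdd (s t : ℕ) (r : Fin (s + t)) (m : Fin t) :
    Wmat (s + t) r (Fin.natAdd s m) = if h : (r : ℕ) < t then Wmat t ⟨r, h⟩ m else 0 := by
  simp only [Wmat, of_apply, Fin.val_natAdd]
  split_ifs <;> first | rfl | omega

lemma Wmat_mulVec_append_zero (s t : ℕ) (u : Fin t → ℝ) (r : Fin (s + t)) :
    (Wmat (s + t) *ᵥ Fin.append 0 u) r
      = if h : (r : ℕ) < t then (Wmat t *ᵥ u) ⟨r, h⟩ else 0 := by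
  simp only [mulVec, dotProduct, Fin.sum_univ_add, Fin.append_left, Fin.append_right,
    Pi.zero_apply, mul_zero, sum_const_zero, zero_add, Wmat_add_natAdd]
  split_ifs <;> simp

lemma sum_dite_val_lt {M : Type*} [AddCommMonoid M] (s t : ℕ) (g : Fin t → M) (c : M) :
    ∑ r : Fin (s + t), (if h : (r : ℕ) < t then g ⟨r, h⟩ else c) = ∑ m, g m + s • c := by
  rw [← (finCongr (add_comm t s)).sum_comp, Fin.sum_univ_add]
  simp

lemma fk_append_zero (σ ζ : ℝ) (s t : ℕ) (u : Fin t → ℝ) :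
    fk σ ζ (s + t) (Fin.append 0 u) = 8 * s * Real.log 2 + fk σ ζ t u := by
  simp only [fk_eq_sum_rowLoss, Wmat_mulVec_append_zero, apply_dite (rowLoss σ ζ), rowLoss_zero]
  rw [sum_dite_val_lt s t (fun m => rowLoss σ ζ ((Wmat t *ᵥ u) m)), nsmul_eq_mul]
  ring

def appendZero (s t : ℕ) : (Fin t → ℝ) →ₗ[ℝ] Fin (s + t) → ℝ where
  toFun u := Fin.append 0 u
  map_add' u v := by ext i; refine Fin.addCases (fun _ => ?_) (fun _ => ?_) i <;> simp
  map_smul' c u := by ext i; refine Fin.addCases (fun _ => ?_) (fun _ => ?_) i <;> simp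

lemma range_appendZero (s t : ℕ) : LinearMap.range (appendZero s t) = Kspan (s + t) t := by
  rw [LinearMap.range_eq_map, ← (Pi.basisFun ℝ (Fin t)).span_eq, Submodule.map_span, Kspan,
    Nat.add_sub_cancel, ← Fin.range_natAdd, ← Set.range_comp, ← Set.range_comp]
  congr 2
  ext m i
  refine Fin.addCases (fun _ => ?_) (fun _ => ?_) i <;>
    simp [appendZero, Pi.single_apply, Fin.ext_iff]
  omega

theorem min_fk_on_Kspan_general (σ ζ : ℝ) (k t : ℕ) (htk : t ≤ k) :
    sInf (fk σ ζ k '' (Kspan k t : Set (Fin k → ℝ)))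
      = 8 * ((k - t : ℕ) : ℝ) * Real.log 2 + sInf (Set.range (fk σ ζ t)) := by
  obtain ⟨s, rfl⟩ := Nat.exists_eq_add_of_le' htk
  have himage : fk σ ζ (s + t) '' (Kspan (s + t) t : Set (Fin (s + t) → ℝ))
      = (8 * s * Real.log 2 + ·) '' Set.range (fk σ ζ t) := by
    rw [← range_appendZero, LinearMap.coe_range, ← Set.range_comp, ← Set.range_comp]
    exact congrArg Set.range (funext (fk_append_zero σ ζ s t))
  have hbdd : BddBelow (Set.range (fk σ ζ t)) := ⟨0, Set.forall_mem_range.2 (fk_nonneg σ ζ t)⟩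
  rw [Nat.add_sub_cancel, himage]
  simpa using ((OrderIso.addLeft _).map_csInf' (Set.range_nonempty _) hbdd).symm

theorem min_fk_on_Kspan (σ ζ : ℝ) (hζ : 0 < ζ) (hζσ : ζ < σ) (k t : ℕ) (ht : 1 ≤ t)
    (htk : t ≤ k) :
    sInf (fk σ ζ k '' (Kspan k t : Set (Fin k → ℝ)))
      = 8 * ((k - t : ℕ) : ℝ) * Real.log 2 + sInf (Set.range (fk σ ζ t)) :=
  min_fk_on_Kspan_general σ ζ k t htk
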